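/- Let S be a graded F-algebra concentrated in even degrees, n ≥ 1, R = S ⊗ F[u]/(u^{n+1}) with the truncated-product map ψ_A, and let d > 0 be even. Let (R̃, t, j) be a d-dimensional deformation of R, ψ̃ an extension of ψ_A to R̃, ũ ∈ R̃² an element with j(ũ) = 1 ⊗ u, and ξ̃1, …, ξ̃g ∈ R̃² elements with j(ξ̃i) ∈ S² ⊗ 1 for all i. Let R̃1 ⊆ R̃ be the subalgebra generated by t, ξ̃1, …, ξ̃g. Then: (a) ψ̃(x, ũ^n) = 0 for every x ∈ R̃1; and (b) every x ∈ R̃1 ∩ t·R̃ can be written as x = t·y for some y ∈ R̃ with j(y) ∈ S ⊗ 1. -/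

import Mathlib

/-!
By the associativity identity (1') and `ψ̃(1, ·) = 0`, the elements `x` with `ψ̃(x, ·) = 0` form a
subalgebra; by (2') and (3') it contains `t` and the `ξ̃ᵢ`, which gives (a). For (b), write
`x = t·y`; the identity (1') for `(t, y, z)` gives `t·ψ̃(y, z) = 0`, so `ψ̃(y, z) ∈ t·R̃ = ker j`
and `ψ_A(j y, ·) = 0`. Writing `j y = Σᵢ sᵢ ⊗ uⁱ`, `ψ_A(j y, uⁿ) = Σ_{i ≥ 1} sᵢ ⊗ u^{i-1}`,
so its vanishing forces `j y = s₀ ⊗ 1`.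
-/

/-- A finite-dimensional graded-commutative ℤ-graded `F`-algebra
("graded F-algebra" in the sense of Seidel's paper). -/
structure GradedFAlg (F : Type) [Field F] where
  carrier : Type
  [ring : Ring carrier]
  [alg : Algebra F carrier]
  grading : ℤ → Submodule F carrier
  [gradedAlgebra : GradedAlgebra grading]
  [findim : FiniteDimensional F carrier]
  gcomm : ∀ (i j : ℤ) (x y : carrier), x ∈ grading i → y ∈ grading j →
    x * y = ((-1 : F) ^ (i * j)) • (y * x)

attribute [instance] GradedFAlg.ring GradedFAlg.alg GradedFAlg.gradedAlgebra GradedFAlg.findim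

variable {F : Type} [Field F]

/-- A homomorphism of graded `F`-algebras. -/
structure GradedFAlg.Hom (A B : GradedFAlg F) where
  toAlgHom : A.carrier →ₐ[F] B.carrier
  graded : ∀ (i : ℤ) (x : A.carrier), x ∈ A.grading i → toAlgHom x ∈ B.grading i

/-- The identity homomorphism of graded `F`-algebras. -/
def GradedFAlg.Hom.id (A : GradedFAlg F) : GradedFAlg.Hom A A :=
  ⟨AlgHom.id F A.carrier, fun _ _ h => h⟩

/-- A `d`-dimensional (first order infinitesimal) deformation `(R̃, t, j)` of `A`:
`t ∈ R̃^d` with `t² = 0` whose annihilator is exactly `t·R̃`, and `j : R̃ → A`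
a surjective homomorphism of graded algebras with kernel `t·R̃`. -/
structure Deformation (F : Type) [Field F] (A : GradedFAlg F) (d : ℤ) where
  alg : GradedFAlg F
  t : alg.carrier
  t_mem : t ∈ alg.grading d
  t_sq : t * t = 0
  t_ann : ∀ x : alg.carrier, t * x = 0 ↔ ∃ y : alg.carrier, x = t * y
  j : GradedFAlg.Hom alg A
  j_surj : Function.Surjective j.toAlgHom
  j_ker : ∀ x : alg.carrier, j.toAlgHom x = 0 ↔ ∃ y : alg.carrier, x = t * y

/-- A morphism of deformations over a homomorphism `f` of graded `F`-algebras. -/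
structure DefMorphismOver {A B : GradedFAlg F} (f : GradedFAlg.Hom A B) {d : ℤ}
    (D1 : Deformation F A d) (D2 : Deformation F B d) where
  toHom : GradedFAlg.Hom D1.alg D2.alg
  map_t : toHom.toAlgHom D1.t = D2.t
  over_j : ∀ x, D2.j.toAlgHom (toHom.toAlgHom x) = f.toAlgHom (D1.j.toAlgHom x)

/-- Two deformations of `A` are isomorphic if there is a bijective morphism of
deformations (i.e. a morphism over the identity of `A`) between them. -/
def Deformation.Iso {A : GradedFAlg F} {d : ℤ} (D1 D2 : Deformation F A d) : Prop :=
  ∃ φ : DefMorphismOver (GradedFAlg.Hom.id A) D1 D2, Function.Bijective φ.toHom.toAlgHom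

/-- `R` is (a model of) the graded tensor product `S ⊗ F[u]/(u^{n+1})` with
`deg u = 2`: `ι : S → R` is a homomorphism of graded algebras, `u^{n+1} = 0`,
and the map `(s₀, …, s_n) ↦ Σᵢ ι(sᵢ)·uⁱ` is a linear bijection `S^{n+1} ≅ R`. -/
structure IsTensorCPn (S R : GradedFAlg F) (n : ℕ) (ι : GradedFAlg.Hom S R)
    (u : R.carrier) : Prop where
  u_mem : u ∈ R.grading 2
  u_pow : u ^ (n + 1) = 0
  free : Function.Bijective (fun c : Fin (n + 1) → S.carrier =>
    ∑ i : Fin (n + 1), ι.toAlgHom (c i) * u ^ (i : ℕ))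

/-- The bilinear map `ψ_A` on `R = S ⊗ F[u]/(u^{n+1})` is the truncated product:
`ψ_A(x ⊗ uⁱ, y ⊗ uʲ) = xy ⊗ u^{i+j−n−1}` if `i + j ≥ n + 1` and `= 0` otherwise. -/
def IsTruncatedProduct (S R : GradedFAlg F) (n : ℕ) (ι : GradedFAlg.Hom S R)
    (u : R.carrier) (ψA : R.carrier →ₗ[F] R.carrier →ₗ[F] R.carrier) : Prop :=
  ∀ (x y : S.carrier) (i j : ℕ), i ≤ n → j ≤ n →
    ψA (ι.toAlgHom x * u ^ i) (ι.toAlgHom y * u ^ j) =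
      if n + 1 ≤ i + j then ι.toAlgHom (x * y) * u ^ (i + j - (n + 1)) else 0

/-- An extension of the truncated product `ψ_A` to a deformation `(R̃, t, j)` of
`R = S ⊗ F[u]/(u^{n+1})`: a graded symmetric bilinear map `ψ̃` of degree
`−2(n+1)` satisfying (1') the associativity identity,
(2') `ψ̃(1,·) = ψ̃(t,·) = 0`, (3') `ψ̃(w,·) = 0` whenever `w ∈ R̃²` has
`j(w) ∈ S² ⊗ 1`, and (4') `j(ψ̃(x,y)) = ψ_A(j x, j y)`. -/
structure IsExtensionOfPsiA {F : Type} [Field F] {S R : GradedFAlg F} (n : ℕ)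
    (ι : GradedFAlg.Hom S R) (u : R.carrier)
    (ψA : R.carrier →ₗ[F] R.carrier →ₗ[F] R.carrier) {d : ℤ} (D : Deformation F R d)
    (ψt : D.alg.carrier →ₗ[F] D.alg.carrier →ₗ[F] D.alg.carrier) : Prop where
  deg : ∀ (i j : ℤ) (x y : D.alg.carrier), x ∈ D.alg.grading i → y ∈ D.alg.grading j →
    ψt x y ∈ D.alg.grading (i + j - 2 * ((n : ℤ) + 1))
  symm : ∀ (i j : ℤ) (x y : D.alg.carrier), x ∈ D.alg.grading i → y ∈ D.alg.grading j →
    ψt x y = ((-1 : F) ^ (i * j)) • ψt y x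
  assoc : ∀ x y z : D.alg.carrier,
    x * ψt y z - ψt (x * y) z + ψt x (y * z) - ψt x y * z = 0
  one : ∀ x : D.alg.carrier, ψt 1 x = 0
  t_zero : ∀ x : D.alg.carrier, ψt D.t x = 0
  div : ∀ w : D.alg.carrier, w ∈ D.alg.grading 2 →
    (∃ s : S.carrier, s ∈ S.grading 2 ∧ D.j.toAlgHom w = ι.toAlgHom s) →
    ∀ x : D.alg.carrier, ψt w x = 0
  compat : ∀ x y : D.alg.carrier,
    D.j.toAlgHom (ψt x y) = ψA (D.j.toAlgHom x) (D.j.toAlgHom y)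


namespace LinearMap

variable {K A : Type*} [CommSemiring K] [Ring A] [Algebra K A]

theorem apply_eq_zero_of_mem_adjoin (ψ : A →ₗ[K] A →ₗ[K] A) (hone : ψ 1 = 0)
    (hassoc : ∀ x y z, x * ψ y z - ψ (x * y) z + ψ x (y * z) - ψ x y * z = 0)
    {s : Set A} (hs : ∀ x ∈ s, ψ x = 0) {x : A} (hx : x ∈ Algebra.adjoin K s) : ψ x = 0 := by
  induction hx using Algebra.adjoin_induction with
  | mem a ha => exact hs a ha
  | algebraMap r => rw [Algebra.algebraMap_eq_smul_one, map_smul, hone, smul_zero]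
  | add a b _ _ ha hb => rw [map_add, ha, hb, add_zero]
  | mul a b _ _ ha hb =>
    ext z
    simpa [ha, hb] using hassoc a b z

end LinearMap

variable {S R : GradedFAlg F}

namespace Deformation

variable {d : ℤ} (D : Deformation F R d)

theorem map_eq_zero_iff_t_mul_eq_zero (x : D.alg.carrier) :
    D.j.toAlgHom x = 0 ↔ D.t * x = 0 :=
  (D.j_ker x).trans (D.t_ann x).symm

end Deformation

namespace IsTruncatedProduct

variable {n : ℕ} {ι : GradedFAlg.Hom S R} {u : R.carrier}
  {ψA : R.carrier →ₗ[F] R.carrier →ₗ[F] R.carrier}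

theorem exists_eq_of_apply_pow_eq_zero (hψA : IsTruncatedProduct S R n ι u ψA)
    (hT : IsTensorCPn S R n ι u) {r : R.carrier} (hr : ψA r (u ^ n) = 0) :
    ∃ s, r = ι.toAlgHom s := by
  obtain ⟨c, rfl⟩ := hT.free.2 r
  have hu : u ^ n = ι.toAlgHom 1 * u ^ n := by rw [map_one, one_mul]
  set w := ∑ k : Fin n, ι.toAlgHom (c k.succ) * u ^ (k : ℕ)
  have hconst : ψA (ι.toAlgHom (c 0) * u ^ 0) (u ^ n) = 0 := by
    rw [hu, hψA _ _ _ _ (Nat.zero_le n) le_rfl, if_neg (by omega)]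
  have hshift (k : Fin n) :
      ψA (ι.toAlgHom (c k.succ) * u ^ (k.succ : ℕ)) (u ^ n) =
        ι.toAlgHom (c k.succ) * u ^ (k : ℕ) := by
    rw [hu, hψA _ _ _ _ k.succ.is_le le_rfl, if_pos (by simp), mul_one, Fin.val_succ,
      show (k : ℕ) + 1 + n - (n + 1) = k by omega]
  have hψ : ψA (∑ i : Fin (n + 1), ι.toAlgHom (c i) * u ^ (i : ℕ)) (u ^ n) = w := by
    simp only [Fin.sum_univ_succ, map_add, map_sum, LinearMap.add_apply, LinearMap.sum_apply,
      Fin.val_zero, hconst, hshift, zero_add, w]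
  have hw : w = 0 := hψ ▸ hr
  refine ⟨c 0, ?_⟩
  calc ∑ i : Fin (n + 1), ι.toAlgHom (c i) * u ^ (i : ℕ)
      = ι.toAlgHom (c 0) + w * u := by
        simp [Fin.sum_univ_succ, w, Finset.sum_mul, pow_succ, mul_assoc]
    _ = ι.toAlgHom (c 0) := by rw [hw, zero_mul, add_zero]

end IsTruncatedProduct

namespace IsExtensionOfPsiA

variable {n : ℕ} {ι : GradedFAlg.Hom S R} {u : R.carrier}
  {ψA : R.carrier →ₗ[F] R.carrier →ₗ[F] R.carrier} {d : ℤ} {D : Deformation F R d}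
  {ψt : D.alg.carrier →ₗ[F] D.alg.carrier →ₗ[F] D.alg.carrier}

theorem apply_eq_zero_of_mem_adjoin (hext : IsExtensionOfPsiA n ι u ψA D ψt) {g : ℕ}
    {ξ : Fin g → D.alg.carrier} (hξ_mem : ∀ i, ξ i ∈ D.alg.grading 2)
    (hξ : ∀ i, ∃ s : S.carrier, s ∈ S.grading 2 ∧ D.j.toAlgHom (ξ i) = ι.toAlgHom s)
    {x : D.alg.carrier} (hx : x ∈ Algebra.adjoin F ({D.t} ∪ Set.range ξ)) : ψt x = 0 := by
  refine ψt.apply_eq_zero_of_mem_adjoin (LinearMap.ext hext.one) hext.assoc ?_ hx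
  rintro _ (rfl | ⟨i, rfl⟩)
  · exact LinearMap.ext hext.t_zero
  · exact LinearMap.ext (hext.div _ (hξ_mem i) (hξ i))

theorem apply_map_eq_zero_of_apply_t_mul_eq_zero (hext : IsExtensionOfPsiA n ι u ψA D ψt)
    {y : D.alg.carrier} (hy : ψt (D.t * y) = 0) (z : D.alg.carrier) :
    ψA (D.j.toAlgHom y) (D.j.toAlgHom z) = 0 := by
  have h := hext.assoc D.t y z
  rw [hy, hext.t_zero, hext.t_zero, LinearMap.zero_apply, zero_mul, sub_zero, add_zero,
    sub_zero, ← D.map_eq_zero_iff_t_mul_eq_zero, hext.compat] at h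
  exact h

end IsExtensionOfPsiA

theorem main_computation_general
    {F : Type} [Field F] (S R : GradedFAlg F)
    (n : ℕ) (ι : GradedFAlg.Hom S R) (u : R.carrier)
    (hT : IsTensorCPn S R n ι u)
    (ψA : R.carrier →ₗ[F] R.carrier →ₗ[F] R.carrier)
    (hψA : IsTruncatedProduct S R n ι u ψA)
    (d : ℤ)
    (D : Deformation F R d)
    (ψt : D.alg.carrier →ₗ[F] D.alg.carrier →ₗ[F] D.alg.carrier)
    (hext : IsExtensionOfPsiA n ι u ψA D ψt)
    (ut : D.alg.carrier)
    (g : ℕ) (ξ : Fin g → D.alg.carrier)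
    (hξ_mem : ∀ i : Fin g, ξ i ∈ D.alg.grading 2)
    (hξ : ∀ i : Fin g, ∃ s : S.carrier, s ∈ S.grading 2 ∧
      D.j.toAlgHom (ξ i) = ι.toAlgHom s) :
    (∀ x : D.alg.carrier, x ∈ Algebra.adjoin F ({D.t} ∪ Set.range ξ) →
      ψt x (ut ^ n) = 0) ∧
    (∀ x : D.alg.carrier, x ∈ Algebra.adjoin F ({D.t} ∪ Set.range ξ) →
      (∃ y : D.alg.carrier, x = D.t * y) →
      ∃ y : D.alg.carrier, x = D.t * y ∧
        ∃ s : S.carrier, D.j.toAlgHom y = ι.toAlgHom s) := by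
  have hker {x} (hx : x ∈ Algebra.adjoin F ({D.t} ∪ Set.range ξ)) : ψt x = 0 :=
    hext.apply_eq_zero_of_mem_adjoin hξ_mem hξ hx
  refine ⟨fun x hx => by rw [hker hx, LinearMap.zero_apply], ?_⟩
  rintro _ hx ⟨y, rfl⟩
  refine ⟨y, rfl, hψA.exists_eq_of_apply_pow_eq_zero hT ?_⟩
  obtain ⟨z, hz⟩ := D.j_surj (u ^ n)
  rw [← hz]
  exact hext.apply_map_eq_zero_of_apply_t_mul_eq_zero (hker hx) z

/-- Let `S` be a graded `F`-algebra concentrated in even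
degrees, `n ≥ 1`, `R = S ⊗ F[u]/(u^{n+1})` with the truncated product `ψ_A`,
and `d > 0` even. Let `(R̃, t, j)` be a `d`-dimensional deformation of `R`,
`ψ̃` an extension of `ψ_A` to `R̃`, `ũ ∈ R̃²` with `j(ũ) = 1 ⊗ u`, and
`ξ̃₁, …, ξ̃_g ∈ R̃²` with `j(ξ̃ᵢ) ∈ S² ⊗ 1`. Let `R̃1 ⊆ R̃` be the subalgebra
generated by `t, ξ̃₁, …, ξ̃_g`. Then:
(a) `ψ̃(x, ũⁿ) = 0` for every `x ∈ R̃1`; and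
(b) every `x ∈ R̃1 ∩ t·R̃` can be written as `x = t·y`
with `j(y) ∈ S ⊗ 1`. -/
theorem main_computation
    {F : Type} [Field F] (S R : GradedFAlg F)
    (hSeven : ∀ i : ℤ, Odd i → S.grading i = ⊥)
    (n : ℕ) (hn : 1 ≤ n) (ι : GradedFAlg.Hom S R) (u : R.carrier)
    (hT : IsTensorCPn S R n ι u)
    (ψA : R.carrier →ₗ[F] R.carrier →ₗ[F] R.carrier)
    (hψA : IsTruncatedProduct S R n ι u ψA)
    (d : ℤ) (hd : 0 < d) (heven : Even d)
    (D : Deformation F R d)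
    (ψt : D.alg.carrier →ₗ[F] D.alg.carrier →ₗ[F] D.alg.carrier)
    (hext : IsExtensionOfPsiA n ι u ψA D ψt)
    (ut : D.alg.carrier) (hut_mem : ut ∈ D.alg.grading 2)
    (hut : D.j.toAlgHom ut = u)
    (g : ℕ) (ξ : Fin g → D.alg.carrier)
    (hξ_mem : ∀ i : Fin g, ξ i ∈ D.alg.grading 2)
    (hξ : ∀ i : Fin g, ∃ s : S.carrier, s ∈ S.grading 2 ∧
      D.j.toAlgHom (ξ i) = ι.toAlgHom s) :
    (∀ x : D.alg.carrier, x ∈ Algebra.adjoin F ({D.t} ∪ Set.range ξ) →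
      ψt x (ut ^ n) = 0) ∧
    (∀ x : D.alg.carrier, x ∈ Algebra.adjoin F ({D.t} ∪ Set.range ξ) →
      (∃ y : D.alg.carrier, x = D.t * y) →
      ∃ y : D.alg.carrier, x = D.t * y ∧
        ∃ s : S.carrier, D.j.toAlgHom y = ι.toAlgHom s) :=
  main_computation_general S R n ι u hT ψA hψA d D ψt hext ut g ξ hξ_mem hξ
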